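/- There is no homogeneous polynomial F₇(z1,z2) of degree 8 with z2^2 * ∂F₇/∂z1 + z1^2 * ∂F₇/∂z2 = c * (z1 - z2)(z1^2 + z1*z2 + z2^2)(z1^6 - 11*z1^3*z2^3 + z2^6) for any nonzero constant c. Equivalently, R_h does not lie in the image of the Lie-derivative operator along X0 acting on degree-8 homogeneous polynomials. -/

import Mathlib

open MvPolynomial

/-
Write `L F = X₁² ∂₀F + X₀² ∂₁F` and `f_{a,b}` for the coefficients of `F`. The coefficients of
`L F` at `X₀⁹`, `X₁⁹`, `X₀⁶X₁³`, `X₀³X₁⁶` are `f₇₁`, `f₁₇`, `7f₇₁ + 4f₄₄` and `4f₄₄ + 7f₁₇`, so the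
linear functional `g ↦ (g₆₃ - g₃₆) - 7 (g₉₀ - g₀₉)` kills the image of `L`. On the right-hand
side `c (X₀⁹ - 12X₀⁶X₁³ + 12X₀³X₁⁶ - X₁⁹)` it takes the value `-38c`, hence `c = 0`.
-/

namespace MvPolynomial

variable {R σ : Type*} [CommRing R]

theorem coeff_X_pow_mul_pderiv {i j : σ} (hij : i ≠ j) (k : ℕ)
    (F : MvPolynomial σ R) (m : σ →₀ ℕ) :
    coeff m (X j ^ k * pderiv i F) =
      if k ≤ m j then coeff (m - Finsupp.single j k + Finsupp.single i 1) F * (m i + 1)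
      else 0 := by
  simp only [X_pow_eq_monomial, coeff_monomial_mul', one_mul, Finsupp.single_le_iff,
    coeff_pderiv, Finsupp.tsub_apply, Finsupp.single_eq_of_ne hij, tsub_zero]

end MvPolynomial

noncomputable def bideg (a b : ℕ) : Fin 2 →₀ ℕ := Finsupp.single 0 a + Finsupp.single 1 b

section Bidegree

variable (a b k : ℕ)

@[simp] theorem bideg_apply_zero : bideg a b 0 = a := by simp [bideg]

@[simp] theorem bideg_apply_one : bideg a b 1 = b := by simp [bideg]

@[simp] theorem bideg_inj {a b p q : ℕ} : bideg a b = bideg p q ↔ a = p ∧ b = q := by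
  refine ⟨fun h ↦ ⟨?_, ?_⟩, fun ⟨ha, hb⟩ ↦ ha ▸ hb ▸ rfl⟩
  · simpa using DFunLike.congr_fun h 0
  · simpa using DFunLike.congr_fun h 1

@[simp] theorem bideg_sub_single_zero : bideg a b - Finsupp.single 0 k = bideg (a - k) b := by
  ext i; fin_cases i <;> simp [bideg]

@[simp] theorem bideg_sub_single_one : bideg a b - Finsupp.single 1 k = bideg a (b - k) := by
  ext i; fin_cases i <;> simp [bideg]

@[simp] theorem bideg_add_single_zero : bideg a b + Finsupp.single 0 k = bideg (a + k) b := by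
  ext i; fin_cases i <;> simp [bideg]

@[simp] theorem bideg_add_single_one : bideg a b + Finsupp.single 1 k = bideg a (b + k) := by
  ext i; fin_cases i <;> simp [bideg]

theorem monomial_bideg {R : Type*} [CommRing R] (r : R) :
    monomial (bideg a b) r = C r * X 0 ^ a * X 1 ^ b := by
  simp [bideg, X_pow_eq_monomial, C_mul_monomial, monomial_mul]

end Bidegree

section Obstruction

variable {R : Type*} [CommRing R]

noncomputable def obstruction : MvPolynomial (Fin 2) R →ₗ[R] R :=
  lcoeff R (bideg 6 3) - lcoeff R (bideg 3 6) - 7 • (lcoeff R (bideg 9 0) - lcoeff R (bideg 0 9))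

theorem obstruction_apply (G : MvPolynomial (Fin 2) R) :
    obstruction G = coeff (bideg 6 3) G - coeff (bideg 3 6) G
      - 7 * (coeff (bideg 9 0) G - coeff (bideg 0 9) G) := by
  simp [obstruction]

theorem obstruction_lie (F : MvPolynomial (Fin 2) R) :
    obstruction (X 1 ^ 2 * pderiv 0 F + X 0 ^ 2 * pderiv 1 F) = 0 := by
  simp only [obstruction_apply, coeff_add, coeff_X_pow_mul_pderiv zero_ne_one,
    coeff_X_pow_mul_pderiv one_ne_zero, bideg_apply_zero, bideg_apply_one, bideg_sub_single_zero,
    bideg_sub_single_one, bideg_add_single_zero, bideg_add_single_one]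
  norm_num
  ring

theorem obstruction_rh :
    obstruction ((X 0 - X 1) * (X 0 ^ 2 + X 0 * X 1 + X 1 ^ 2)
      * (X 0 ^ 6 - 11 * X 0 ^ 3 * X 1 ^ 3 + X 1 ^ 6) : MvPolynomial (Fin 2) R) = -38 := by
  have hmonomials : ((X 0 - X 1) * (X 0 ^ 2 + X 0 * X 1 + X 1 ^ 2)
      * (X 0 ^ 6 - 11 * X 0 ^ 3 * X 1 ^ 3 + X 1 ^ 6) : MvPolynomial (Fin 2) R) =
      monomial (bideg 9 0) 1 - monomial (bideg 6 3) 12 + monomial (bideg 3 6) 12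
        - monomial (bideg 0 9) 1 := by
    simp only [monomial_bideg, map_one, map_ofNat]
    ring
  rw [hmonomials, obstruction_apply]
  norm_num [coeff_monomial]

end Obstruction

theorem stmt5 :
    ¬ ∃ (F : MvPolynomial (Fin 2) ℝ) (c : ℝ), F.IsHomogeneous 8 ∧ c ≠ 0 ∧
      X 1 ^ 2 * pderiv 0 F + X 0 ^ 2 * pderiv 1 F =
        c • ((X 0 - X 1) * (X 0 ^ 2 + X 0 * X 1 + X 1 ^ 2)
          * (X 0 ^ 6 - 11 * X 0 ^ 3 * X 1 ^ 3 + X 1 ^ 6)) := by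
  rintro ⟨F, c, -, hc, hF⟩
  have hobs := congrArg obstruction hF
  rw [obstruction_lie, map_smul, obstruction_rh, smul_eq_mul] at hobs
  exact hc (by linarith)
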